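/- Assume: (a) for every x ∈ H and every λ ∈ A(r⁻,r⁺) the series Σ_{n≥1}(P_E Tⁿ x)λ^{-n} + Σ_{n≥0}(P_E T'*ⁿ x)λⁿ converges in E; (b) for every x ∈ H and every λ ∈ A(r'⁻,r'⁺) the series Σ_{n≥1}(P_E T'ⁿ x)λ^{-n} + Σ_{n≥0}(P_E T*ⁿ x)λⁿ converges in E; (c) r⁻ < 1 and r'⁻ ≤ 1 ≤ r'⁺. Let x ∈ H satisfy limsup_{n→∞} ‖P_E T'*ⁿ x‖^{1/n} = 0. Then there is an open neighbourhood W ⊆ (0,∞) of 1 such that for every r ∈ W the series Σ_{n≥1} r^{-2n} T'*ⁿ P_E Tⁿ x and Σ_{n≥0} r^{2n} Tⁿ P_E T'*ⁿ x converge absolutely in H, and lim_{r→1} ( Σ_{n≥1} r^{-2n} T'*ⁿ P_E Tⁿ x + Σ_{n≥0} r^{2n} Tⁿ P_E T'*ⁿ x ) = Σ_{n≥1} T'*ⁿ P_E Tⁿ x + Σ_{n≥0} Tⁿ P_E T'*ⁿ x. -/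

import Mathlib

open ContinuousLinearMap

/-- Orthogonal projection onto the closed subspace `E`, as an operator `H →L[ℂ] H`. -/
noncomputable def PE {H : Type*} [NormedAddCommGroup H] [InnerProductSpace ℂ H]
    (E : Submodule ℂ H) [CompleteSpace E] : H →L[ℂ] H :=
  E.subtypeL.comp E.orthogonalProjectionOnto

/-- The open annulus A(a,b) = {z ∈ ℂ : a < |z| < b}. -/
def annulus (a b : ℝ) : Set ℂ := {z : ℂ | a < ‖z‖ ∧ ‖z‖ < b}

/-!
Write `A n = T'*ⁿ⁺¹ P_E Tⁿ⁺¹ x` and `B n = Tⁿ P_E T'*ⁿ x`. Since `T'*ⁿ⁺¹ P_E = (P_E T'ⁿ⁺¹)* P_E`,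
`‖A n‖ ≤ ‖P_E T'ⁿ⁺¹‖ ‖P_E Tⁿ⁺¹ x‖`. Convergence (a) at a real point `σ ∈ (r⁻, 1)` bounds the
second factor by `C σⁿ⁺¹`, and (b) at a real point `ρ ∈ (r'⁻, σ⁻¹)` bounds the first one by
`C' ρⁿ⁺¹` through Banach–Steinhaus, so `‖A n‖ = O(qⁿ)` with `q = σρ < 1`. The limsup hypothesis is
a root test: `Σ Rⁿ ‖B n‖` converges for every `R`. Hence on an interval `(a, 2)` with `q < a² < 1`
both series are dominated by convergent series independent of `r`, so their sums are continuous
there, in particular at `r = 1`.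
-/

open Filter Topology Set

section RootTest

theorem isBoundedUnder_rpow_inv_of_le_mul_pow {u : ℕ → ℝ} {C K : ℝ} (hu : ∀ n, 0 ≤ u n)
    (hK : 0 ≤ K) (hCK : ∀ n, u n ≤ C * K ^ n) :
    IsBoundedUnder (· ≤ ·) atTop fun n => u n ^ (1 / (n : ℝ)) := by
  refine isBoundedUnder_of_eventually_le (a := max C 1 * K) ?_
  filter_upwards [eventually_ne_atTop 0] with n hn
  calc u n ^ (1 / (n : ℝ)) ≤ (max C 1 * K ^ n) ^ (1 / (n : ℝ)) := by
        gcongr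
        · exact hu n
        · exact (hCK n).trans (mul_le_mul_of_nonneg_right (le_max_left _ _) (pow_nonneg hK n))
    _ = max C 1 ^ (1 / (n : ℝ)) * K := by
        rw [Real.mul_rpow (by positivity) (by positivity), one_div,
          Real.pow_rpow_inv_natCast hK hn]
    _ ≤ max C 1 * K := by
        gcongr
        calc max C 1 ^ (1 / (n : ℝ)) ≤ max C 1 ^ (1 : ℝ) :=
              Real.rpow_le_rpow_of_exponent_le (le_max_right _ _)
                (div_le_one_of_le₀ (by exact_mod_cast Nat.one_le_iff_ne_zero.2 hn) (by positivity))
          _ = max C 1 := Real.rpow_one _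

-- `limsup` in `ℝ` takes a junk value on sequences that are unbounded above.
theorem summable_pow_mul_of_limsup_rpow_eq_zero {u : ℕ → ℝ} (hu : ∀ n, 0 ≤ u n)
    (hbdd : IsBoundedUnder (· ≤ ·) atTop fun n => u n ^ (1 / (n : ℝ)))
    (hlim : limsup (fun n => u n ^ (1 / (n : ℝ))) atTop = 0) (R : ℝ) :
    Summable fun n => R ^ n * u n := by
  set η := (2 * (|R| + 1))⁻¹
  have hη : 0 < η := by positivity
  have hRη : |R| * η ≤ 1 / 2 := by
    rw [← div_eq_mul_inv, div_le_iff₀ (by positivity)]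
    linarith [abs_nonneg R]
  refine Summable.of_norm_bounded_eventually_nat summable_geometric_two ?_
  filter_upwards [eventually_lt_of_limsup_lt (hlim ▸ hη) hbdd, eventually_ne_atTop 0]
    with n hlt hn
  have hun : u n < η ^ n := by
    rwa [one_div, Real.rpow_inv_lt_iff_of_pos (hu n) hη.le (by positivity),
      Real.rpow_natCast] at hlt
  calc ‖R ^ n * u n‖ = |R| ^ n * u n := by
        rw [Real.norm_eq_abs, abs_mul, abs_pow, abs_of_nonneg (hu n)]
    _ ≤ |R| ^ n * η ^ n := by gcongr
    _ = (|R| * η) ^ n := (mul_pow _ _ _).symm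
    _ ≤ (1 / 2) ^ n := by gcongr

end RootTest

section Operators

variable {𝕜 V : Type*} [NontriviallyNormedField 𝕜] [NormedAddCommGroup V] [NormedSpace 𝕜 V]

theorem norm_pow_apply_le (T : V →L[𝕜] V) (n : ℕ) (y : V) : ‖(T ^ n) y‖ ≤ ‖T‖ ^ n * ‖y‖ := by
  induction n generalizing y with
  | zero => simp
  | succ n ih =>
    calc ‖(T ^ (n + 1)) y‖ = ‖(T ^ n) (T y)‖ := by rw [pow_succ]; rfl
      _ ≤ ‖T‖ ^ n * (‖T‖ * ‖y‖) := by
        grw [ih, T.le_opNorm]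
      _ = ‖T‖ ^ (n + 1) * ‖y‖ := by ring

theorem norm_le_mul_pow_of_norm_zpow_neg_smul_le {c : 𝕜} (hc : c ≠ 0) {n : ℕ} {w : V} {C : ℝ}
    (h : ‖c ^ (-(n + 1 : ℤ)) • w‖ ≤ C) : ‖w‖ ≤ C * ‖c‖ ^ (n + 1) := by
  have hpos : 0 < ‖c‖ ^ (n + 1) := by positivity
  rwa [norm_smul, norm_zpow, zpow_neg, ← Nat.cast_succ, zpow_natCast, inv_mul_le_iff₀ hpos,
    mul_comm] at h

theorem exists_norm_le_mul_pow_of_summable {c : 𝕜} (hc : c ≠ 0) {v : ℕ → V}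
    (h : Summable fun n : ℕ => c ^ (-(n + 1 : ℤ)) • v n) :
    ∃ C, ∀ n, ‖v n‖ ≤ C * ‖c‖ ^ (n + 1) := by
  obtain ⟨C, hC⟩ := h.tendsto_atTop_zero.norm.bddAbove_range
  exact ⟨C, fun n => norm_le_mul_pow_of_norm_zpow_neg_smul_le hc (hC ⟨n, rfl⟩)⟩

theorem exists_opNorm_le_mul_pow_of_summable [CompleteSpace V] {F : Type*} [NormedAddCommGroup F]
    [NormedSpace 𝕜 F] {c : 𝕜} (hc : c ≠ 0) {S : ℕ → V →L[𝕜] F}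
    (h : ∀ y, Summable fun n : ℕ => c ^ (-(n + 1 : ℤ)) • S n y) :
    ∃ C, ∀ n, ‖S n‖ ≤ C * ‖c‖ ^ (n + 1) := by
  obtain ⟨C, hC⟩ := banach_steinhaus (g := fun n : ℕ => c ^ (-(n + 1 : ℤ)) • S n) fun y => by
    obtain ⟨C, hC⟩ := (h y).tendsto_atTop_zero.norm.bddAbove_range
    exact ⟨C, fun n => hC ⟨n, rfl⟩⟩
  exact ⟨C, fun n => norm_le_mul_pow_of_norm_zpow_neg_smul_le hc (hC n)⟩

theorem summable_pow_mul_norm_pow_apply_of_limsup_rpow_eq_zero (T : V →L[𝕜] V) {w : ℕ → V}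
    {C K : ℝ} (hK : 0 ≤ K) (hw : ∀ n, ‖w n‖ ≤ C * K ^ n)
    (hlim : limsup (fun n => ‖w n‖ ^ (1 / (n : ℝ))) atTop = 0) {R : ℝ} (hR : 0 ≤ R) :
    Summable fun n => R ^ n * ‖(T ^ n) (w n)‖ := by
  have hroot := summable_pow_mul_of_limsup_rpow_eq_zero (fun n => norm_nonneg _)
    (isBoundedUnder_rpow_inv_of_le_mul_pow (fun n => norm_nonneg _) hK hw) hlim (R * ‖T‖)
  refine hroot.of_nonneg_of_le (fun n => by positivity) fun n => ?_
  calc R ^ n * ‖(T ^ n) (w n)‖ ≤ R ^ n * (‖T‖ ^ n * ‖w n‖) := by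
        gcongr
        exact norm_pow_apply_le T n (w n)
    _ = (R * ‖T‖) ^ n * ‖w n‖ := by ring

end Operators

section Hilbert

variable {𝕜 E F : Type*} [RCLike 𝕜] [NormedAddCommGroup E] [InnerProductSpace 𝕜 E]
  [CompleteSpace E] [NormedAddCommGroup F] [InnerProductSpace 𝕜 F] [CompleteSpace F]

theorem norm_adjoint_starProjection_apply_le (U : Submodule 𝕜 E) [U.HasOrthogonalProjection]
    (B : F →L[𝕜] E) (y : E) :
    ‖adjoint B (U.starProjection y)‖ ≤ ‖U.starProjection ∘L B‖ * ‖U.starProjection y‖ := by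
  have hcomp : adjoint B (U.starProjection y) =
      adjoint (U.starProjection ∘L B) (U.starProjection y) := by
    rw [adjoint_comp, (isSelfAdjoint_starProjection U).adjoint_eq, comp_apply,
      U.starProjection_eq_self_iff.2 (U.starProjection_apply_mem y)]
  rw [hcomp, ← LinearIsometryEquiv.norm_map adjoint (U.starProjection ∘L B)]
  exact le_opNorm _ _

theorem adjoint_pow (A : E →L[𝕜] E) (n : ℕ) : adjoint A ^ n = adjoint (A ^ n) := by
  simp only [← star_eq_adjoint, star_pow]

theorem exists_norm_adjoint_pow_starProjection_pow_le (U : Submodule 𝕜 E)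
    [U.HasOrthogonalProjection] (T T' : E →L[𝕜] E) (x : E) {σ ρ : 𝕜} (hσ : σ ≠ 0) (hρ : ρ ≠ 0)
    (hT : Summable fun n : ℕ => σ ^ (-(n + 1 : ℤ)) • U.starProjection ((T ^ (n + 1)) x))
    (hT' : ∀ y, Summable fun n : ℕ => ρ ^ (-(n + 1 : ℤ)) • U.starProjection ((T' ^ (n + 1)) y)) :
    ∃ D, ∀ n : ℕ, ‖(adjoint T' ^ (n + 1)) (U.starProjection ((T ^ (n + 1)) x))‖ ≤
      D * (‖σ‖ * ‖ρ‖) ^ (n + 1) := by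
  obtain ⟨C₁, hC₁⟩ := exists_norm_le_mul_pow_of_summable hσ hT
  obtain ⟨C₂, hC₂⟩ := exists_opNorm_le_mul_pow_of_summable
    (S := fun n => U.starProjection ∘L T' ^ (n + 1)) hρ hT'
  refine ⟨C₂ * C₁, fun n => ?_⟩
  calc ‖(adjoint T' ^ (n + 1)) (U.starProjection ((T ^ (n + 1)) x))‖
      ≤ ‖U.starProjection ∘L T' ^ (n + 1)‖ * ‖U.starProjection ((T ^ (n + 1)) x)‖ := by
        rw [adjoint_pow]
        exact norm_adjoint_starProjection_apply_le U _ _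
    _ ≤ (C₂ * ‖ρ‖ ^ (n + 1)) * (C₁ * ‖σ‖ ^ (n + 1)) := by
        gcongr
        · exact (norm_nonneg _).trans (hC₂ n)
        · exact hC₂ n
        · exact hC₁ n
    _ = C₂ * C₁ * (‖σ‖ * ‖ρ‖) ^ (n + 1) := by ring

end Hilbert

section Laurent

variable {V : Type*} [NormedAddCommGroup V] [NormedSpace ℂ V]

theorem zpow_neg_two_mul_succ {G : Type*} [DivisionRing G] (x : G) (n : ℕ) :
    x ^ (-(2 * (n + 1) : ℤ)) = (x ^ 2)⁻¹ ^ (n + 1) := by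
  rw [← inv_pow, ← pow_mul, ← inv_zpow', ← zpow_natCast]
  push_cast
  ring_nf

theorem norm_ofReal_zpow_neg_two_mul_succ_smul_le {a r D q : ℝ} (ha : 0 < a) (hr : a ≤ r)
    {n : ℕ} {v : V} (hv : ‖v‖ ≤ D * q ^ (n + 1)) :
    ‖(r : ℂ) ^ (-(2 * (n + 1) : ℤ)) • v‖ ≤ D * (q / a ^ 2) ^ (n + 1) := by
  rw [norm_smul, zpow_neg_two_mul_succ, norm_pow, norm_inv, norm_pow, Complex.norm_real,
    Real.norm_of_nonneg (ha.le.trans hr)]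
  calc ((r ^ 2)⁻¹) ^ (n + 1) * ‖v‖ ≤ ((a ^ 2)⁻¹) ^ (n + 1) * (D * q ^ (n + 1)) := by
        gcongr
    _ = D * (q / a ^ 2) ^ (n + 1) := by ring

theorem norm_ofReal_pow_two_mul_smul_le {r R : ℝ} (hr : 0 ≤ r) (hR : r ≤ R) (n : ℕ) (v : V) :
    ‖(r : ℂ) ^ (2 * n) • v‖ ≤ (R ^ 2) ^ n * ‖v‖ := by
  rw [norm_smul, norm_pow, Complex.norm_real, Real.norm_of_nonneg hr, pow_mul]
  gcongr

variable [CompleteSpace V]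

theorem exists_nhds_one_tendsto_tsum_zpow_smul_add_tsum_pow_smul {A B : ℕ → V} {D q : ℝ}
    (hq₀ : 0 ≤ q) (hq₁ : q < 1) (hA : ∀ n, ‖A n‖ ≤ D * q ^ (n + 1))
    (hB : Summable fun n => (4 : ℝ) ^ n * ‖B n‖) :
    ∃ W : Set ℝ, IsOpen W ∧ (1 : ℝ) ∈ W ∧ W ⊆ Ioi 0 ∧
      (∀ r ∈ W, Summable (fun n : ℕ => ‖(r : ℂ) ^ (-(2 * (n + 1) : ℤ)) • A n‖) ∧
        Summable (fun n : ℕ => ‖(r : ℂ) ^ (2 * n) • B n‖)) ∧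
      Tendsto (fun r : ℝ => (∑' n : ℕ, (r : ℂ) ^ (-(2 * (n + 1) : ℤ)) • A n) +
          ∑' n : ℕ, (r : ℂ) ^ (2 * n) • B n) (𝓝[W] 1) (𝓝 ((∑' n, A n) + ∑' n, B n)) := by
  obtain ⟨a, ha₀, ha₁, hqa⟩ : ∃ a : ℝ, 0 < a ∧ a < 1 ∧ q / a ^ 2 < 1 :=
    ⟨(1 + q) / 2, by positivity, by linarith, (div_lt_one (by positivity)).2 (by nlinarith)⟩
  have hsumA : Summable fun n : ℕ => D * (q / a ^ 2) ^ (n + 1) :=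
    ((summable_nat_add_iff 1).2 (summable_geometric_of_lt_one (by positivity) hqa)).mul_left D
  have hboundA : ∀ (n : ℕ), ∀ r ∈ Ioo a 2,
      ‖(r : ℂ) ^ (-(2 * (n + 1) : ℤ)) • A n‖ ≤ D * (q / a ^ 2) ^ (n + 1) :=
    fun n r hr => norm_ofReal_zpow_neg_two_mul_succ_smul_le ha₀ hr.1.le (hA n)
  have hboundB : ∀ (n : ℕ), ∀ r ∈ Ioo a 2, ‖(r : ℂ) ^ (2 * n) • B n‖ ≤ (4 : ℝ) ^ n * ‖B n‖ :=
    fun n r hr => by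
      simpa [show (2 : ℝ) ^ 2 = 4 by norm_num] using
        norm_ofReal_pow_two_mul_smul_le (ha₀.trans hr.1).le hr.2.le n (B n)
  have hcontA : ContinuousOn (fun r : ℝ => ∑' n : ℕ, (r : ℂ) ^ (-(2 * (n + 1) : ℤ)) • A n)
      (Ioo a 2) := by
    refine continuousOn_tsum (fun n => ?_) hsumA hboundA
    refine (Complex.continuous_ofReal.continuousOn.zpow₀ _ fun r hr => ?_).smul continuousOn_const
    exact Or.inl (Complex.ofReal_ne_zero.2 (ha₀.trans hr.1).ne')
  have hcontB : ContinuousOn (fun r : ℝ => ∑' n : ℕ, (r : ℂ) ^ (2 * n) • B n) (Ioo a 2) :=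
    continuousOn_tsum (fun n => by fun_prop) hB hboundB
  have h₁ : (1 : ℝ) ∈ Ioo a 2 := ⟨ha₁, by norm_num⟩
  refine ⟨Ioo a 2, isOpen_Ioo, h₁, fun r hr => ha₀.trans hr.1, fun r hr => ⟨?_, ?_⟩, ?_⟩
  · exact hsumA.of_nonneg_of_le (fun _ => norm_nonneg _) (hboundA · r hr)
  · exact hB.of_nonneg_of_le (fun _ => norm_nonneg _) (hboundB · r hr)
  · have h := ((hcontA.add hcontB).continuousWithinAt h₁).tendsto
    simp only [Pi.add_apply, Complex.ofReal_one, one_zpow, one_pow, one_smul] at h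
    exact h

end Laurent

theorem ofReal_mem_annulus {a b s : ℝ} (hs : 0 ≤ s) (ha : a < s) (hb : s < b) :
    (s : ℂ) ∈ annulus a b := by
  change a < ‖(s : ℂ)‖ ∧ ‖(s : ℂ)‖ < b
  rw [Complex.norm_of_nonneg hs]
  exact ⟨ha, hb⟩

theorem stmt_13_general {H : Type*} [NormedAddCommGroup H] [InnerProductSpace ℂ H] [CompleteSpace H]
    (T T' : H →L[ℂ] H)
    (E : Submodule ℂ H) [CompleteSpace E]
    (rm rp rm' rp' : ℝ) (hrm : 0 ≤ rm) (hr : rm < rp) (hrm' : 0 ≤ rm') (hr' : rm' < rp')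
    (ha : ∀ x : H, ∀ lam ∈ annulus rm rp,
      Summable (fun n : ℕ => (lam ^ (-(n + 1 : ℤ))) • PE E ((T ^ (n + 1)) x)) ∧
      Summable (fun n : ℕ =>
        (lam ^ n) • PE E (((ContinuousLinearMap.adjoint T') ^ n) x)))
    (hb : ∀ x : H, ∀ lam ∈ annulus rm' rp',
      Summable (fun n : ℕ => (lam ^ (-(n + 1 : ℤ))) • PE E ((T' ^ (n + 1)) x)) ∧
      Summable (fun n : ℕ =>
        (lam ^ n) • PE E (((ContinuousLinearMap.adjoint T) ^ n) x)))
    (hc1 : rm < 1) (hc2 : rm' ≤ 1)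
    (x : H)
    (hx : Filter.limsup
      (fun n : ℕ => ‖PE E (((ContinuousLinearMap.adjoint T') ^ n) x)‖ ^ (1 / (n : ℝ)))
      Filter.atTop = 0) :
    ∃ Wnbhd : Set ℝ, IsOpen Wnbhd ∧ (1 : ℝ) ∈ Wnbhd ∧ Wnbhd ⊆ Set.Ioi (0 : ℝ) ∧
      (∀ r ∈ Wnbhd,
        Summable (fun n : ℕ =>
          ‖((r : ℂ) ^ (-(2 * (n + 1) : ℤ))) •
            ((ContinuousLinearMap.adjoint T') ^ (n + 1)) (PE E ((T ^ (n + 1)) x))‖) ∧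
        Summable (fun n : ℕ =>
          ‖((r : ℂ) ^ (2 * n)) •
            (T ^ n) (PE E (((ContinuousLinearMap.adjoint T') ^ n) x))‖)) ∧
      Filter.Tendsto
        (fun r : ℝ =>
          (∑' n : ℕ, ((r : ℂ) ^ (-(2 * (n + 1) : ℤ))) •
              ((ContinuousLinearMap.adjoint T') ^ (n + 1)) (PE E ((T ^ (n + 1)) x))) +
            ∑' n : ℕ, ((r : ℂ) ^ (2 * n)) •
              (T ^ n) (PE E (((ContinuousLinearMap.adjoint T') ^ n) x)))
        (nhdsWithin 1 Wnbhd)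
        (nhds ((∑' n : ℕ,
            ((ContinuousLinearMap.adjoint T') ^ (n + 1)) (PE E ((T ^ (n + 1)) x))) +
          ∑' n : ℕ, (T ^ n) (PE E (((ContinuousLinearMap.adjoint T') ^ n) x)))) := by
  obtain ⟨σ, hrmσ, hσ⟩ := exists_between (lt_min hr hc1)
  have hσ₀ : 0 < σ := hrm.trans_lt hrmσ
  have hσ₁ : 1 < σ⁻¹ := (one_lt_inv₀ hσ₀).2 (hσ.trans_le (min_le_right _ _))
  obtain ⟨ρ, hrmρ, hρ⟩ := exists_between (lt_min hr' (hc2.trans_lt hσ₁))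
  have hρ₀ : 0 < ρ := hrm'.trans_lt hrmρ
  obtain ⟨D, hD⟩ := exists_norm_adjoint_pow_starProjection_pow_le E T T' x
    (Complex.ofReal_ne_zero.2 hσ₀.ne') (Complex.ofReal_ne_zero.2 hρ₀.ne')
    (ha x σ (ofReal_mem_annulus hσ₀.le hrmσ (hσ.trans_le (min_le_left _ _)))).1
    (fun y => (hb y ρ (ofReal_mem_annulus hρ₀.le hrmρ (hρ.trans_le (min_le_left _ _)))).1)
  rw [Complex.norm_of_nonneg hσ₀.le, Complex.norm_of_nonneg hρ₀.le] at hD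
  have hσρ : σ * ρ < 1 := by
    simpa [hσ₀.ne'] using mul_lt_mul_of_pos_left (hρ.trans_le (min_le_right _ _)) hσ₀
  refine exists_nhds_one_tendsto_tsum_zpow_smul_add_tsum_pow_smul (by positivity) hσρ hD ?_
  refine summable_pow_mul_norm_pow_apply_of_limsup_rpow_eq_zero T (C := ‖x‖)
    (norm_nonneg (adjoint T')) (fun n => ?_) hx (by norm_num)
  calc ‖PE E ((adjoint T' ^ n) x)‖ ≤ ‖(adjoint T' ^ n) x‖ := E.norm_starProjection_apply_le _
    _ ≤ ‖x‖ * ‖adjoint T'‖ ^ n := by rw [mul_comm]; exact norm_pow_apply_le _ n x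

theorem stmt_13 {H : Type*} [NormedAddCommGroup H] [InnerProductSpace ℂ H] [CompleteSpace H]
    (T T' W : H →L[ℂ] H)
    (hleft : ∃ S : H →L[ℂ] H, S.comp T = ContinuousLinearMap.id ℂ H)
    (hW1 : W.comp ((ContinuousLinearMap.adjoint T).comp T) = ContinuousLinearMap.id ℂ H)
    (hW2 : ((ContinuousLinearMap.adjoint T).comp T).comp W = ContinuousLinearMap.id ℂ H)
    (hT' : T' = T.comp W)
    (E : Submodule ℂ H) [CompleteSpace E]
    (rm rp rm' rp' : ℝ) (hrm : 0 ≤ rm) (hr : rm < rp) (hrm' : 0 ≤ rm') (hr' : rm' < rp')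
    (ha : ∀ x : H, ∀ lam ∈ annulus rm rp,
      Summable (fun n : ℕ => (lam ^ (-(n + 1 : ℤ))) • PE E ((T ^ (n + 1)) x)) ∧
      Summable (fun n : ℕ =>
        (lam ^ n) • PE E (((ContinuousLinearMap.adjoint T') ^ n) x)))
    (hb : ∀ x : H, ∀ lam ∈ annulus rm' rp',
      Summable (fun n : ℕ => (lam ^ (-(n + 1 : ℤ))) • PE E ((T' ^ (n + 1)) x)) ∧
      Summable (fun n : ℕ =>
        (lam ^ n) • PE E (((ContinuousLinearMap.adjoint T) ^ n) x)))
    (hc1 : rm < 1) (hc2 : rm' ≤ 1) (hc3 : 1 ≤ rp')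
    (x : H)
    (hx : Filter.limsup
      (fun n : ℕ => ‖PE E (((ContinuousLinearMap.adjoint T') ^ n) x)‖ ^ (1 / (n : ℝ)))
      Filter.atTop = 0) :
    ∃ Wnbhd : Set ℝ, IsOpen Wnbhd ∧ (1 : ℝ) ∈ Wnbhd ∧ Wnbhd ⊆ Set.Ioi (0 : ℝ) ∧
      (∀ r ∈ Wnbhd,
        Summable (fun n : ℕ =>
          ‖((r : ℂ) ^ (-(2 * (n + 1) : ℤ))) •
            ((ContinuousLinearMap.adjoint T') ^ (n + 1)) (PE E ((T ^ (n + 1)) x))‖) ∧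
        Summable (fun n : ℕ =>
          ‖((r : ℂ) ^ (2 * n)) •
            (T ^ n) (PE E (((ContinuousLinearMap.adjoint T') ^ n) x))‖)) ∧
      Filter.Tendsto
        (fun r : ℝ =>
          (∑' n : ℕ, ((r : ℂ) ^ (-(2 * (n + 1) : ℤ))) •
              ((ContinuousLinearMap.adjoint T') ^ (n + 1)) (PE E ((T ^ (n + 1)) x))) +
            ∑' n : ℕ, ((r : ℂ) ^ (2 * n)) •
              (T ^ n) (PE E (((ContinuousLinearMap.adjoint T') ^ n) x)))
        (nhdsWithin 1 Wnbhd)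
        (nhds ((∑' n : ℕ,
            ((ContinuousLinearMap.adjoint T') ^ (n + 1)) (PE E ((T ^ (n + 1)) x))) +
          ∑' n : ℕ, (T ^ n) (PE E (((ContinuousLinearMap.adjoint T') ^ n) x)))) :=
  stmt_13_general T T' E rm rp rm' rp' hrm hr hrm' hr' ha hb hc1 hc2 x hx
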